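/- arXiv:2307.14474 — 2 statements merged into one kernel-verified Lean document; each statement's English description precedes it below -/
import Mathlib

section
/- Let (Ω, μ) be a probability space, d a positive integer, and p_0, …, p_{d−1} : Ω → ℝ measurable and square-integrable. Define the d×d real matrix S by S_{k,j} = ∫ p_k p_j dμ and the vector m by m_k = ∫ p_k dμ, and assume m_k > 0 for all k. Suppose V is an orthogonal d×d matrix and D is a diagonal matrix with strictly positive diagonal entries such that S = V D Vᵀ, and let E be the diagonal matrix with entries E_{kk} = (D_{kk})^{−1/2}. Then the matrix E Vᵀ Δ(m) V E is invertible, where Δ(m) is the diagonal matrix with diagonal m, and Tr((E Vᵀ Δ(m) V E)^{−1}) = Σ_{k<d} (∫ p_k² dμ) / (∫ p_k dμ). -/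
open MeasureTheory Matrix

/-- Lemma 2 of the paper: in the probability representation, the IPC
`Tr((I + Q̃)⁻¹) = Tr((E Vᵀ Δ(m) V E)⁻¹)` equals `∑ₖ (∫ pₖ²) / (∫ pₖ)`. -/
theorem stmt_2 {Ω : Type*} [MeasurableSpace Ω] (μ : Measure Ω) [IsProbabilityMeasure μ]
    (d : ℕ) (hd : 0 < d) (p : Fin d → Ω → ℝ)
    (hmeas : ∀ k, Measurable (p k))
    (hsq : ∀ k, Integrable (fun x => (p k x) ^ 2) μ)
    (S : Matrix (Fin d) (Fin d) ℝ)
    (hS : ∀ k j, S k j = ∫ x, p k x * p j x ∂μ)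
    (m : Fin d → ℝ)
    (hm : ∀ k, m k = ∫ x, p k x ∂μ)
    (hmpos : ∀ k, 0 < m k)
    (V : Matrix (Fin d) (Fin d) ℝ) (hV : Vᵀ * V = 1)
    (Ddiag : Fin d → ℝ) (hDpos : ∀ k, 0 < Ddiag k)
    (hSVD : S = V * Matrix.diagonal Ddiag * Vᵀ)
    (E : Matrix (Fin d) (Fin d) ℝ)
    (hE : E = Matrix.diagonal fun k => (Real.sqrt (Ddiag k))⁻¹) :
    IsUnit (E * Vᵀ * Matrix.diagonal m * V * E) ∧
      Matrix.trace (E * Vᵀ * Matrix.diagonal m * V * E)⁻¹ =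
        ∑ k, (∫ x, (p k x) ^ 2 ∂μ) / (∫ x, p k x ∂μ) := by
  set Δ := Matrix.diagonal m with hΔ
  set E' : Matrix (Fin d) (Fin d) ℝ := Matrix.diagonal fun k => Real.sqrt (Ddiag k) with hE'
  set Δ' : Matrix (Fin d) (Fin d) ℝ := Matrix.diagonal fun k => (m k)⁻¹ with hΔ'
  set N : Matrix (Fin d) (Fin d) ℝ := E' * Vᵀ * Δ' * V * E' with hN
  have hsqrt_ne : ∀ k, Real.sqrt (Ddiag k) ≠ 0 := fun k =>
    Real.sqrt_ne_zero'.2 (hDpos k)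
  have hEE' : E * E' = 1 := by
    rw [hE, hE', Matrix.diagonal_mul_diagonal, ← Matrix.diagonal_one]
    exact congrArg Matrix.diagonal (funext fun k => inv_mul_cancel₀ (hsqrt_ne k))
  have hE'E' : E' * E' = Matrix.diagonal Ddiag := by
    rw [hE', Matrix.diagonal_mul_diagonal]
    exact congrArg Matrix.diagonal (funext fun k => Real.mul_self_sqrt (hDpos k).le)
  have hΔΔ' : Δ * Δ' = 1 := by
    rw [hΔ, hΔ', Matrix.diagonal_mul_diagonal, ← Matrix.diagonal_one]
    exact congrArg Matrix.diagonal (funext fun k => mul_inv_cancel₀ (hmpos k).ne')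
  have hVV : V * Vᵀ = 1 := mul_eq_one_comm.mp hV
  have cancel : ∀ (A B : Matrix (Fin d) (Fin d) ℝ), A * B = 1 →
      ∀ X : Matrix (Fin d) (Fin d) ℝ, A * (B * X) = X := by
    intro A B h X
    rw [← Matrix.mul_assoc, h, Matrix.one_mul]
  have key : (E * Vᵀ * Δ * V * E) * N = 1 := by
    rw [hN]
    simp only [Matrix.mul_assoc]
    rw [cancel E E' hEE', cancel V Vᵀ hVV, cancel Δ Δ' hΔΔ', cancel Vᵀ V hV, hEE']
  have key' : N * (E * Vᵀ * Δ * V * E) = 1 := mul_eq_one_comm.mp key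
  refine ⟨⟨⟨_, N, key, key'⟩, rfl⟩, ?_⟩
  rw [Matrix.inv_eq_right_inv key]
  have htr : N.trace = (S * Δ').trace := by
    rw [hN]
    calc (E' * Vᵀ * Δ' * V * E').trace
        = ((E' * Vᵀ * Δ') * (V * E')).trace := by
          simp only [Matrix.mul_assoc]
      _ = ((V * E') * (E' * Vᵀ * Δ')).trace := Matrix.trace_mul_comm _ _
      _ = (V * Matrix.diagonal Ddiag * Vᵀ * Δ').trace := by
          simp only [Matrix.mul_assoc]
          rw [← Matrix.mul_assoc E' E', hE'E']
      _ = (S * Δ').trace := by rw [hSVD]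
  rw [htr]
  rw [Matrix.trace]
  simp only [Matrix.diag, hΔ', Matrix.mul_diagonal]
  refine Finset.sum_congr rfl fun k _ => ?_
  rw [hS k k, hm k, div_eq_mul_inv]
  congr 1
  exact integral_congr_ae (Filter.Eventually.of_forall fun x => (sq (p k x)).symm)
end

section
/- Let p be a real number with 0 ≤ p ≤ 1, let θ = arccos(√p), let X be the 2×2 complex matrix [[0,1],[1,0]], let U₁ = exp(−(i θ) • X) and U₂ = exp((i θ) • X). Then for every 2×2 complex matrix ρ, (1/2) · (U₁ ρ U₁† + U₂ ρ U₂†) = p • ρ + (1 − p) • (X ρ X). -/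
/-!
Since `X² = 1`, `exp (± iθ X) = cos θ ± i sin θ X`, and `U₁ = U₂†` because `X` is self-adjoint.
In `U₂ ρ U₂† + U₂† ρ U₂` the cross terms `± i sin θ cos θ (Xρ - ρX)` cancel, leaving
`2 (cos² θ ρ + sin² θ XρX)`, and `cos² θ = p` by the choice of `θ`.
-/

open Matrix
open scoped Matrix.Norms.L2Operator

theorem exp_smul_of_mul_self_eq_one {A : Type*} [Ring A] [Algebra ℂ A] [TopologicalSpace A]
    [IsTopologicalRing A] [ContinuousSMul ℂ A] [T2Space A] {a : A} (ha : a * a = 1) (z : ℂ) :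
    NormedSpace.exp (z • a) = Complex.cosh z • (1 : A) + Complex.sinh z • a := by
  have h_even (k : ℕ) : a ^ (2 * k) = 1 := by rw [pow_mul, sq, ha, one_pow]
  have h_odd (k : ℕ) : a ^ (2 * k + 1) = a := by rw [pow_succ, h_even, one_mul]
  rw [NormedSpace.exp_eq_tsum ℂ]
  refine HasSum.tsum_eq (HasSum.even_add_odd ?_ ?_)
  · convert (Complex.hasSum_cosh z).smul_const (1 : A) using 2 with k
    rw [smul_pow, h_even, smul_smul, mul_comm, div_eq_mul_inv]
  · convert (Complex.hasSum_sinh z).smul_const a using 2 with k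
    rw [smul_pow, h_odd, smul_smul, mul_comm, div_eq_mul_inv]

theorem IsSelfAdjoint.mul_mul_star_add_star_mul_mul {A : Type*} [Ring A] [StarRing A]
    [Algebra ℂ A] [StarModule ℂ A] {a : A} (ha : IsSelfAdjoint a) (c s : ℝ) (ρ : A) {u : A}
    (hu : u = (c : ℂ) • 1 + (s * Complex.I) • a) :
    u * ρ * star u + star u * ρ * u = (2 * c ^ 2 : ℂ) • ρ + (2 * s ^ 2 : ℂ) • (a * ρ * a) := by
  have hu_star : star u = (c : ℂ) • 1 - (s * Complex.I) • a := by
    simp [hu, star_smul, ha.star_eq, sub_eq_add_neg]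
  rw [hu_star, hu]
  simp only [add_mul, sub_mul, mul_add, mul_sub, smul_mul_assoc, mul_smul_comm, one_mul, mul_one,
    mul_assoc]
  match_scalars <;> ring_nf
  simp [Complex.I_sq]

/-- With `θ = arccos(√p)`, averaging conjugation by `U₁ = e^{-iθX}` and
`U₂ = e^{+iθX}` realizes the binary symmetric channel with flip probability
`1 - p`. -/
theorem stmt_11 (p : ℝ) (hp0 : 0 ≤ p) (hp1 : p ≤ 1)
    (θ : ℝ) (hθ : θ = Real.arccos (Real.sqrt p))
    (X : Matrix (Fin 2) (Fin 2) ℂ) (hX : X = !![0, 1; 1, 0])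
    (U₁ U₂ : Matrix (Fin 2) (Fin 2) ℂ)
    (hU₁ : U₁ = NormedSpace.exp ((-(Complex.I * (θ : ℂ))) • X))
    (hU₂ : U₂ = NormedSpace.exp ((Complex.I * (θ : ℂ)) • X)) :
    ∀ ρ : Matrix (Fin 2) (Fin 2) ℂ,
      (1 / 2 : ℂ) • (U₁ * ρ * U₁ᴴ + U₂ * ρ * U₂ᴴ) =
        (p : ℂ) • ρ + ((1 - p : ℝ) : ℂ) • (X * ρ * X) := by
  intro ρ
  have hX_sa : IsSelfAdjoint X := by
    subst hX; ext i j; fin_cases i <;> fin_cases j <;> simp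
  have hX_sq : X * X = 1 := by
    subst hX; ext i j; fin_cases i <;> fin_cases j <;> simp [Matrix.mul_apply]
  have hcos : Real.cos θ ^ 2 = p := by
    rw [hθ, Real.cos_arccos (by linarith [Real.sqrt_nonneg p]) (Real.sqrt_le_one.mpr hp1),
      Real.sq_sqrt hp0]
  have hsin : Real.sin θ ^ 2 = 1 - p := by rw [Real.sin_sq, hcos]
  have hU₂_cos_sin : U₂ = (Real.cos θ : ℂ) • 1 + (Real.sin θ * Complex.I) • X := by
    rw [hU₂, exp_smul_of_mul_self_eq_one hX_sq, mul_comm, Complex.cosh_mul_I,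
      Complex.sinh_mul_I, Complex.ofReal_cos, Complex.ofReal_sin]
  have hU₁_star : U₁ = star U₂ := by
    rw [hU₁, hU₂, NormedSpace.star_exp, star_smul, hX_sa.star_eq]
    simp
  rw [hU₁_star, ← star_eq_conjTranspose, ← star_eq_conjTranspose, star_star, add_comm,
    hX_sa.mul_mul_star_add_star_mul_mul _ _ ρ hU₂_cos_sin, smul_add, smul_smul, smul_smul,
    ← hsin, ← hcos]
  push_cast
  ring_nf
end
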